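/- Rokhlin lemma for Cantor systems: let X be a Cantor set, T an aperiodic homeomorphism of X, μ_1, ..., μ_k Borel probability measures on X, ε > 0, and n ≥ 2. Then there exists a clopen set E ⊆ X such that E, T(E), ..., T^{n-1}(E) are pairwise disjoint and μ_i(E ∪ T(E) ∪ ... ∪ T^{n-1}(E)) > 1 − ε for all i = 1, ..., k. -/

import Mathlib

open Set Function MeasureTheory ENNReal

set_option linter.unusedSectionVars false
set_option linter.unusedVariables false
set_option maxHeartbeats 1000000



section Toolkit
variable {X : Type*} [TopologicalSpace X]

lemma symm_iterate_apply' (T : X ≃ₜ X) (i : ℕ) (x : X) :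
    (⇑T.symm)^[i] ((⇑T)^[i] x) = x :=
  (Function.LeftInverse.iterate T.symm_apply_apply i) x

lemma iterate_symm_apply' (T : X ≃ₜ X) (i : ℕ) (x : X) :
    (⇑T)^[i] ((⇑T.symm)^[i] x) = x :=
  (Function.LeftInverse.iterate T.apply_symm_apply i) x

lemma image_iterate' (T : X ≃ₜ X) (i : ℕ) (s : Set X) :
    (⇑T)^[i] '' s = ((⇑T.symm)^[i]) ⁻¹' s := by
  exact congrFun (Set.image_eq_preimage_of_inverse
    (Function.LeftInverse.iterate T.symm_apply_apply i)
    (Function.LeftInverse.iterate T.apply_symm_apply i)) s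

lemma continuous_iterate' (T : X ≃ₜ X) (i : ℕ) : Continuous ((⇑T)^[i]) := by
  induction i with
  | zero => simpa using continuous_id
  | succ k ih => rw [Function.iterate_succ]; exact ih.comp T.continuous

lemma continuous_symm_iterate' (T : X ≃ₜ X) (i : ℕ) : Continuous ((⇑T.symm)^[i]) :=
  continuous_iterate' T.symm i

lemma isClopen_image_iterate' (T : X ≃ₜ X) (i : ℕ) {s : Set X} (hs : IsClopen s) :
    IsClopen ((⇑T)^[i] '' s) := by
  rw [image_iterate']
  exact hs.preimage (continuous_symm_iterate' T i)

lemma isClopen_image_symm_iterate' (T : X ≃ₜ X) (i : ℕ) {s : Set X} (hs : IsClopen s) :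
    IsClopen ((⇑T.symm)^[i] '' s) := by
  have := isClopen_image_iterate' T.symm i hs
  simpa using this

lemma mem_image_iterate' (T : X ≃ₜ X) (i : ℕ) (s : Set X) (x : X) :
    x ∈ (⇑T)^[i] '' s ↔ (⇑T.symm)^[i] x ∈ s := by
  rw [image_iterate']; rfl

lemma symm_iterate_of_iterate (T : X ≃ₜ X) {i j : ℕ} (h : i ≤ j) (x : X) :
    (⇑T.symm)^[i] ((⇑T)^[j] x) = (⇑T)^[j - i] x := by
  conv_lhs => rw [show j = i + (j - i) by omega, Function.iterate_add_apply]
  exact symm_iterate_apply' T i _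

lemma iterate_of_symm_iterate (T : X ≃ₜ X) {i j : ℕ} (h : i ≤ j) (x : X) :
    (⇑T)^[i] ((⇑T.symm)^[j] x) = (⇑T.symm)^[j - i] x := by
  have := symm_iterate_of_iterate T.symm (i := i) (j := j) h x
  simpa using this

end Toolkit


section Arith

/-- block start position -/
def bpos (n r J b : ℕ) : ℕ := if b < J then b * n else b * n + r

lemma bpos_lt {n r J q b t : ℕ} (hr : r < n) (hb : b < q) (ht : t < n) :
    bpos n r J b + t < q * n + r := by
  have h1 : b * n + n ≤ q * n := by
    calc b * n + n = (b + 1) * n := by ring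
    _ ≤ q * n := Nat.mul_le_mul_right n hb
  unfold bpos
  split <;> omega

lemma bpos_sep {n r J b b' : ℕ} (hbb : b < b') : bpos n r J b + n ≤ bpos n r J b' := by
  have h1 : b * n + n ≤ b' * n := by
    calc b * n + n = (b + 1) * n := by ring
    _ ≤ b' * n := Nat.mul_le_mul_right n hbb
  unfold bpos
  split <;> split <;> omega

lemma bpos_inj {n r J b b' i j : ℕ} (hi : i < n) (hj : j < n)
    (he : bpos n r J b + i = bpos n r J b' + j) : b = b' ∧ i = j := by
  rcases Nat.lt_trichotomy b b' with h | h | h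
  · have := bpos_sep (n := n) (r := r) (J := J) h; omega
  · subst h
    constructor
    · rfl
    · unfold bpos at he; split at he <;> omega
  · have := bpos_sep (n := n) (r := r) (J := J) h; omega

lemma index_decomp {n q r J i : ℕ} (hn : 0 < n) (hr : r < n) (hJ : J ≤ q)
    (hi : i < q * n + r) :
    (J * n ≤ i ∧ i < J * n + r) ∨ ∃ b t, b < q ∧ t < n ∧ i = bpos n r J b + t := by
  rcases Nat.lt_or_ge i (J * n) with hlt | hge
  · -- below the gap
    right
    refine ⟨i / n, i % n, ?_, Nat.mod_lt _ hn, ?_⟩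
    · have hbJ : i / n < J := Nat.div_lt_of_lt_mul (by rw [Nat.mul_comm]; omega)
      omega
    · have hbJ : i / n < J := Nat.div_lt_of_lt_mul (by rw [Nat.mul_comm]; omega)
      rw [bpos, if_pos hbJ]
      have := Nat.div_add_mod i n
      have h2 : i / n * n = n * (i / n) := Nat.mul_comm _ _
      omega
  · rcases Nat.lt_or_ge i (J * n + r) with hlt2 | hge2
    · exact Or.inl ⟨hge, hlt2⟩
    · right
      refine ⟨(i - r) / n, (i - r) % n, ?_, Nat.mod_lt _ hn, ?_⟩
      · apply Nat.div_lt_of_lt_mul; rw [Nat.mul_comm]; omega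
      · have hbJ : J ≤ (i - r) / n := Nat.le_div_iff_mul_le hn |>.mpr (by omega)
        rw [bpos, if_neg (by omega)]
        have := Nat.div_add_mod (i - r) n
        have h2 : (i - r) / n * n = n * ((i - r) / n) := Nat.mul_comm _ _
        omega

lemma gap_ne {n j j' t t' : ℕ} (ht : t < n) (hlt : j < j') : j * n + t < j' * n + t' := by
  have h1 : (j + 1) * n ≤ j' * n := Nat.mul_le_mul_right n hlt
  have h2 : (j + 1) * n = j * n + n := by ring
  omega

end Arith

section Marker
variable {X : Type*} [TopologicalSpace X] [CompactSpace X] [T2Space X]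
  [TotallyDisconnectedSpace X]

/-- local marker neighborhood -/
lemma exists_local_marker (T : X ≃ₜ X) (hT : ∀ (x : X) (m : ℕ), 1 ≤ m → (⇑T)^[m] x ≠ x)
    (m : ℕ) (x : X) :
    ∃ V : Set X, IsClopen V ∧ x ∈ V ∧
      ∀ i, 1 ≤ i → i < m → Disjoint V ((⇑T)^[i] '' V) := by
  have hts : TotallySeparatedSpace X := loc_compact_t2_tot_disc_iff_tot_sep.mp inferInstance
  have key : ∀ i : ℕ, ∃ V : Set X, IsClopen V ∧ x ∈ V ∧
      (1 ≤ i → i < m → Disjoint V ((⇑T)^[i] '' V)) := by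
    intro i
    by_cases hi : 1 ≤ i ∧ i < m
    · have hne : x ≠ (⇑T)^[i] x := fun h => hT x i hi.1 h.symm
      obtain ⟨C, hC, hxC, hTC⟩ := exists_isClopen_of_totally_separated hne
      refine ⟨C \ ((⇑T)^[i]) ⁻¹' C, ?_, ⟨hxC, hTC⟩, fun _ _ => ?_⟩
      · exact hC.diff (hC.preimage (continuous_iterate' T i))
      · rw [Set.disjoint_left]
        rintro y ⟨hyC, hyP⟩ ⟨z, ⟨_, hzP⟩, rfl⟩
        exact hzP hyC
    · exact ⟨Set.univ, isClopen_univ, trivial, fun h1 h2 => absurd ⟨h1, h2⟩ hi⟩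
  choose V hV using key
  refine ⟨⋂ i ∈ Finset.range m, V i, ?_, ?_, ?_⟩
  · exact isClopen_biInter_finset fun i _ => (hV i).1
  · exact Set.mem_iInter₂.mpr fun i _ => (hV i).2.1
  · intro i h1 h2
    refine Disjoint.mono ?_ ?_ ((hV i).2.2 h1 h2)
    · exact Set.biInter_subset_of_mem (Finset.mem_range.mpr h2)
    · exact Set.image_mono (Set.biInter_subset_of_mem (Finset.mem_range.mpr h2))

/-- window of a set -/
def window (T : X ≃ₜ X) (m : ℕ) (P : Set X) : Set X :=
  ⋃ i ∈ Finset.range m, ((⇑T)^[i] '' P ∪ (⇑T.symm)^[i] '' P)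

lemma window_mono (T : X ≃ₜ X) (m : ℕ) {P Q : Set X} (h : P ⊆ Q) :
    window T m P ⊆ window T m Q := by
  apply Set.iUnion₂_mono
  intro i _
  exact Set.union_subset_union (Set.image_mono h) (Set.image_mono h)

def markerList (T : X ≃ₜ X) (m : ℕ) : List (Set X) → Set X
  | [] => ∅
  | U :: l => markerList T m l ∪ (U \ window T m (markerList T m l))

lemma markerList_isClopen (T : X ≃ₜ X) (m : ℕ) (l : List (Set X))
    (hl : ∀ U ∈ l, IsClopen U) : IsClopen (markerList T m l) := by
  induction l with
  | nil => exact isClopen_empty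
  | cons U l ih =>
    have hU : IsClopen U := hl U (by simp)
    have hA := ih (fun V hV => hl V (by simp [hV]))
    refine hA.union (hU.diff ?_)
    refine isClopen_biUnion_finset fun i _ => ?_
    exact (isClopen_image_iterate' T i hA).union (isClopen_image_symm_iterate' T i hA)

lemma markerList_disjoint (T : X ≃ₜ X) (m : ℕ) (l : List (Set X))
    (hl : ∀ U ∈ l, ∀ i, 1 ≤ i → i < m → Disjoint U ((⇑T)^[i] '' U)) :
    ∀ i, 1 ≤ i → i < m → Disjoint (markerList T m l) ((⇑T)^[i] '' markerList T m l) := by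
  induction l with
  | nil => intro i _ _; simp [markerList]
  | cons U l ih =>
    intro i h1 h2
    have hA := ih (fun V hV => hl V (by simp [hV])) i h1 h2
    have hU := hl U (by simp) i h1 h2
    set A := markerList T m l with hAdef
    set B := U \ window T m A with hBdef
    have hBU : B ⊆ U := Set.diff_subset
    have hBW : Disjoint B (window T m A) := Set.disjoint_sdiff_left
    rw [Set.disjoint_left]
    show ∀ ⦃a⦄, a ∈ A ∪ B → a ∉ (⇑T)^[i] '' (A ∪ B)
    rintro a (haA | haB) hmem <;> rw [Set.image_union] at hmem <;>
      rcases hmem with hmem | hmem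
    · exact Set.disjoint_left.mp hA haA hmem
    · -- a ∈ A, a ∈ T^i '' B : then T.symm^[i] a ∈ B but T.symm^[i] a ∈ window
      obtain ⟨b, hbB, rfl⟩ := hmem
      have hbw : b ∈ window T m A := by
        apply Set.mem_biUnion (Finset.mem_range.mpr h2)
        exact Or.inr ⟨(⇑T)^[i] b, haA, symm_iterate_apply' T i b⟩
      exact Set.disjoint_left.mp hBW hbB hbw
    · -- a ∈ B, a ∈ T^i '' A ⊆ window
      have : a ∈ window T m A := by
        apply Set.mem_biUnion (Finset.mem_range.mpr h2)
        exact Or.inl hmem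
      exact Set.disjoint_left.mp hBW haB this
    · exact Set.disjoint_left.mp (hU.mono hBU (Set.image_mono hBU)) haB hmem

lemma markerList_cover (T : X ≃ₜ X) (m : ℕ) (hm : 1 ≤ m) (l : List (Set X)) :
    ∀ U ∈ l, U ⊆ window T m (markerList T m l) := by
  induction l with
  | nil => simp
  | cons V l ih =>
    intro U hU x hx
    set A := markerList T m l
    have hsub : A ⊆ markerList T m (V :: l) := Set.subset_union_left
    rcases List.mem_cons.mp hU with rfl | hU
    · by_cases hw : x ∈ window T m A
      · exact window_mono T m hsub hw
      · apply Set.mem_biUnion (Finset.mem_range.mpr hm : 0 ∈ Finset.range m)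
        left
        exact ⟨x, Or.inr ⟨hx, hw⟩, by simp⟩
    · exact window_mono T m hsub (ih U hU hx)

lemma exists_marker (T : X ≃ₜ X) (hT : ∀ (x : X) (m : ℕ), 1 ≤ m → (⇑T)^[m] x ≠ x)
    (m : ℕ) (hm : 1 ≤ m) :
    ∃ A : Set X, IsClopen A ∧ (∀ i, 1 ≤ i → i < m → Disjoint A ((⇑T)^[i] '' A)) ∧
      ∀ x : X, ∃ i < m, ((⇑T.symm)^[i] x ∈ A ∨ (⇑T)^[i] x ∈ A) := by
  choose V hV using exists_local_marker T hT m
  obtain ⟨t, ht⟩ := IsCompact.elim_finite_subcover isCompact_univ V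
    (fun x => (hV x).1.2) (fun x _ => Set.mem_iUnion.mpr ⟨x, (hV x).2.1⟩)
  set l : List (Set X) := t.toList.map V with hl
  refine ⟨markerList T m l, markerList_isClopen T m l ?_, markerList_disjoint T m l ?_, ?_⟩
  · rintro U hU
    obtain ⟨x, _, rfl⟩ := List.mem_map.mp hU
    exact (hV x).1
  · rintro U hU
    obtain ⟨x, _, rfl⟩ := List.mem_map.mp hU
    exact (hV x).2.2
  · intro x
    have hx : x ∈ ⋃ y ∈ t, V y := ht (Set.mem_univ x)
    obtain ⟨y, hy, hxy⟩ := Set.mem_iUnion₂.mp hx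
    have : x ∈ window T m (markerList T m l) := by
      apply markerList_cover T m hm l (V y) _ hxy
      exact List.mem_map.mpr ⟨y, Finset.mem_toList.mpr hy, rfl⟩
    obtain ⟨i, hi, hmem⟩ := Set.mem_iUnion₂.mp this
    refine ⟨i, Finset.mem_range.mp hi, ?_⟩
    rcases hmem with h | h
    · left; exact (mem_image_iterate' T i _ x).mp h
    · right
      have := (mem_image_iterate' T.symm i _ x).mp h
      simpa using this

end Marker

section Tower
variable {X : Type*} [TopologicalSpace X]

/-- Points of the marker set with first return time exactly `h`. -/
def base (T : X ≃ₜ X) (A : Set X) (h : ℕ) : Set X :=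
  {x | x ∈ A ∧ (⇑T)^[h] x ∈ A ∧ ∀ i, 0 < i → i < h → (⇑T)^[i] x ∉ A}

variable (T : X ≃ₜ X) (A : Set X) (m : ℕ)

lemma base_isClopen (hA : IsClopen A) (h : ℕ) : IsClopen (base T A h) := by
  have : base T A h =
      (A ∩ ((⇑T)^[h]) ⁻¹' A) ∩ ⋂ i ∈ Finset.Ioo 0 h, ((⇑T)^[i]) ⁻¹' Aᶜ := by
    ext x
    simp only [base, Set.mem_setOf_eq, Set.mem_inter_iff, Set.mem_preimage,
      Set.mem_iInter, Finset.mem_Ioo, Set.mem_compl_iff]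
    tauto
  rw [this]
  refine ((hA.inter (hA.preimage (continuous_iterate' T h))).inter ?_)
  exact isClopen_biInter_finset fun i _ => (hA.compl).preimage (continuous_iterate' T i)

variable (hA1 : ∀ i, 1 ≤ i → i < m → Disjoint A ((⇑T)^[i] '' A))
  (hA2 : ∀ x : X, ∃ i < m, ((⇑T.symm)^[i] x ∈ A ∨ (⇑T)^[i] x ∈ A))
  (hm : 1 ≤ m)

include hA2 hm in
lemma fwd_visit (x : X) : ∃ i, 1 ≤ i ∧ i < 2 * m ∧ (⇑T)^[i] x ∈ A := by
  obtain ⟨i, him, h | h⟩ := hA2 ((⇑T)^[m] x)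
  · rw [symm_iterate_of_iterate T (le_of_lt him) x] at h
    exact ⟨m - i, by omega, by omega, h⟩
  · rw [← Function.iterate_add_apply] at h
    exact ⟨i + m, by omega, by omega, h⟩

include hA2 hm in
lemma bwd_visit (x : X) : ∃ i, (⇑T.symm)^[i] x ∈ A := by
  obtain ⟨i, him, h | h⟩ := hA2 ((⇑T.symm)^[m] x)
  · rw [← Function.iterate_add_apply] at h
    exact ⟨i + m, h⟩
  · rw [iterate_of_symm_iterate T (le_of_lt him) x] at h
    exact ⟨m - i, h⟩

include hA2 hm in
/-- every point lies in some level of the Kakutani–Rokhlin partition -/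
lemma tower_cover (x : X) :
    ∃ h i, h < 2 * m ∧ i < h ∧ x ∈ (⇑T)^[i] '' base T A h := by
  have hbwd := bwd_visit T A m hA2 hm x
  classical
  set i0 := Nat.find hbwd with hi0
  have hy : (⇑T.symm)^[i0] x ∈ A := Nat.find_spec hbwd
  set y := (⇑T.symm)^[i0] x with hydef
  have hfwd := fwd_visit T A m hA2 hm y
  have hfwd' : ∃ j, 1 ≤ j ∧ (⇑T)^[j] y ∈ A := by
    obtain ⟨j, h1, _, h3⟩ := hfwd; exact ⟨j, h1, h3⟩
  set h := Nat.find hfwd' with hhdef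
  obtain ⟨hh1, hhA⟩ := Nat.find_spec hfwd'
  have hh2m : h < 2 * m := by
    obtain ⟨j, hj1, hj2, hj3⟩ := hfwd
    exact lt_of_le_of_lt (Nat.find_le ⟨hj1, hj3⟩) hj2
  -- i0 < h : for 0 < s ≤ i0, T^[s] y = T.symm^[i0 - s] x would contradict minimality of i0
  have hkey : ∀ s, 0 < s → s ≤ i0 → (⇑T)^[s] y ∉ A := by
    intro s hs1 hs2 hmem
    rw [hydef, iterate_of_symm_iterate T hs2 x] at hmem
    exact Nat.find_min hbwd (by omega : i0 - s < i0) hmem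
  have hi0h : i0 < h := by
    by_contra hcon
    push_neg at hcon
    exact hkey h hh1 hcon hhA
  refine ⟨h, i0, hh2m, hi0h, y, ⟨hy, hhA, ?_⟩, iterate_symm_apply' T i0 x⟩
  intro i hi1 hi2 hmem
  exact Nat.find_min hfwd' hi2 ⟨hi1, hmem⟩

/-- levels are pairwise disjoint -/
lemma tower_disjoint {h i h' i' : ℕ} (hi : i < h) (hi' : i' < h') {x : X}
    (hx : x ∈ (⇑T)^[i] '' base T A h) (hx' : x ∈ (⇑T)^[i'] '' base T A h') :
    h = h' ∧ i = i' := by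
  obtain ⟨y, hy, rfl⟩ := hx
  obtain ⟨y', hy', heq⟩ := hx'
  -- first show i = i'
  have key : ∀ a b c d : ℕ, a < b → c < d → ∀ z w : X, z ∈ base T A b → w ∈ base T A d →
      (⇑T)^[a] z = (⇑T)^[c] w → a ≤ c → a = c := by
    intro a b c d hab hcd z w hz hw he hac
    by_contra hne
    have hlt : 0 < c - a := by omega
    have : z = (⇑T)^[c - a] w := by
      have := congrArg ((⇑T.symm)^[a]) he
      rwa [symm_iterate_apply', symm_iterate_of_iterate T hac] at this
    have hwc : (⇑T)^[c - a] w ∈ A := this ▸ hz.1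
    exact hw.2.2 (c - a) hlt (by omega) hwc
  have hii' : i = i' := by
    rcases le_total i i' with hle | hle
    · exact key i h i' h' hi hi' y y' hy hy' heq.symm hle
    · exact (key i' h' i h hi' hi y' y hy' hy heq hle).symm
  subst hii'
  have hyy' : y = y' := by
    have := congrArg ((⇑T.symm)^[i]) heq
    rw [symm_iterate_apply', symm_iterate_apply'] at this
    exact this.symm
  subst hyy'
  refine ⟨?_, rfl⟩
  by_contra hne
  rcases Nat.lt_or_ge h h' with hlt | hge
  · exact hy'.2.2 h (by omega) hlt hy.2.1
  · exact hy.2.2 h' (by omega) (by omega) hy'.2.1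

include hA1 in
/-- a nonempty base has height at least `m` -/
lemma base_height {h : ℕ} (hh : 1 ≤ h) (hne : (base T A h).Nonempty) : m ≤ h := by
  obtain ⟨y, hy⟩ := hne
  by_contra hcon
  push_neg at hcon
  exact Set.disjoint_left.mp (hA1 h hh hcon) hy.2.1 ⟨y, hy.1, rfl⟩

end Tower



/-- The Rokhlin lemma for Cantor systems: for an aperiodic homeomorphism `T` of a Cantor
set, Borel probability measures `μ_1, …, μ_k`, `ε > 0` and `n ≥ 2`, there is a clopen set
`E` such that `E, T(E), …, T^{n-1}(E)` are pairwise disjoint and the tower has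
`μ_i`-measure greater than `1 - ε` for every `i`. -/
theorem stmt_4 {X : Type*} [TopologicalSpace X] [CompactSpace X]
    [TopologicalSpace.MetrizableSpace X] [TotallyDisconnectedSpace X] [PerfectSpace X]
    [Nonempty X] [MeasurableSpace X] [BorelSpace X]
    (T : X ≃ₜ X) (hT : ∀ (x : X) (m : ℕ), 1 ≤ m → (⇑T)^[m] x ≠ x)
    (k : ℕ) (μ : Fin k → Measure X) (hμ : ∀ i, IsProbabilityMeasure (μ i))
    (ε : ℝ) (hε : 0 < ε) (n : ℕ) (hn : 2 ≤ n) :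
    ∃ E : Set X, IsClopen E ∧
      (∀ i j, i < n → j < n → i ≠ j → Disjoint ((⇑T)^[i] '' E) ((⇑T)^[j] '' E)) ∧
      ∀ i, 1 - ENNReal.ofReal ε < μ i (⋃ j ∈ Finset.range n, (⇑T)^[j] '' E) := by
  
  classical
  have hn0 : 0 < n := by omega
  set ε' : ℝ := min ε 2⁻¹ with hε'def
  have hε'pos : 0 < ε' := lt_min hε (by norm_num)
  have hε'le : ε' ≤ ε := min_le_left _ _
  have hε'half : ε' ≤ 2⁻¹ := min_le_right _ _
  obtain ⟨m, hmn, hmbig⟩ : ∃ m : ℕ, n ≤ m ∧ (n * k : ℝ) < ε' * m := by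
    obtain ⟨m0, hm0⟩ := exists_nat_gt (max (n : ℝ) ((n * k : ℝ) / ε'))
    refine ⟨m0, ?_, ?_⟩
    · exact_mod_cast le_of_lt (lt_of_le_of_lt (le_max_left _ _) hm0)
    · have h1 : ((n * k : ℝ)) / ε' < m0 := lt_of_le_of_lt (le_max_right _ _) hm0
      have := (div_lt_iff₀ hε'pos).mp h1
      push_cast
      push_cast at this
      linarith
  have hm1 : 1 ≤ m := le_trans (by omega) hmn
  obtain ⟨A, hAc, hA1, hA2⟩ := exists_marker T hT m hm1
  set B := 2 * m with hBdef
  -- the sum of all the measures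
  set ν : Measure X := ∑ i : Fin k, μ i with hνdef
  have hνle : ∀ (i : Fin k) (s : Set X), μ i s ≤ ν s := by
    intro i s
    rw [hνdef, MeasureTheory.Measure.finset_sum_apply]
    exact Finset.single_le_sum (f := fun j => μ j s) (fun _ _ => zero_le)
      (Finset.mem_univ i)
  have hνuniv : ν Set.univ ≤ (k : ℝ≥0∞) := by
    rw [hνdef, MeasureTheory.Measure.finset_sum_apply]
    have : ∀ i : Fin k, μ i Set.univ = 1 := fun i => (hμ i).measure_univ
    simp [this]
  -- gap sets
  set Gap : ℕ → ℕ → Set X :=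
    fun h j => ⋃ t ∈ Finset.range (h % n), (⇑T)^[j * n + t] '' base T A h with hGapdef
  have hGapclopen : ∀ h j, IsClopen (Gap h j) := fun h j =>
    isClopen_biUnion_finset fun t _ => isClopen_image_iterate' T _ (base_isClopen T A hAc h)
  have hchoice : ∀ h : ℕ, ∃ j, j ≤ h / n ∧ ∀ j', j' ≤ h / n → ν (Gap h j) ≤ ν (Gap h j') := by
    intro h
    obtain ⟨j, hj, hmin⟩ := Finset.exists_min_image (Finset.range (h / n + 1))
      (fun j => ν (Gap h j)) ⟨0, Finset.mem_range.mpr (Nat.succ_pos _)⟩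
    have hjr := Finset.mem_range.mp hj
    exact ⟨j, Nat.lt_succ_iff.mp hjr, fun j' hj' => hmin j' (Finset.mem_range.mpr (Nat.lt_succ_of_le hj'))⟩
  choose jj hjle hjmin using hchoice
  -- the Rokhlin tower base
  set E : Set X := ⋃ h ∈ Finset.range B, ⋃ b ∈ Finset.range (h / n),
    (⇑T)^[bpos n (h % n) (jj h) b] '' base T A h with hEdef
  have hEclopen : IsClopen E := isClopen_biUnion_finset fun h _ =>
    isClopen_biUnion_finset fun b _ => isClopen_image_iterate' T _ (base_isClopen T A hAc h)
  have hTE : ∀ (t : ℕ) (x : X), x ∈ (⇑T)^[t] '' E ↔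
      ∃ h b, h < B ∧ b < h / n ∧ x ∈ (⇑T)^[t + bpos n (h % n) (jj h) b] '' base T A h := by
    intro t x
    constructor
    · rintro ⟨e, he, rfl⟩
      rw [hEdef] at he
      simp only [Set.mem_iUnion, Finset.mem_range, exists_prop] at he
      obtain ⟨h, hh, b, hb, y, hy, rfl⟩ := he
      exact ⟨h, b, hh, hb, y, hy, Function.iterate_add_apply _ t _ y⟩
    · rintro ⟨h, b, hh, hb, y, hy, rfl⟩
      refine ⟨(⇑T)^[bpos n (h % n) (jj h) b] y, ?_, ?_⟩
      · rw [hEdef]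
        simp only [Set.mem_iUnion, Finset.mem_range, exists_prop]
        exact ⟨h, hh, b, hb, y, hy, rfl⟩
      · rw [← Function.iterate_add_apply]
  have hlev : ∀ h b t, b < h / n → t < n → t + bpos n (h % n) (jj h) b < h := by
    intro h b t hb ht
    have hqr := Nat.div_add_mod h n
    have hcm : h / n * n = n * (h / n) := Nat.mul_comm _ _
    have := bpos_lt (n := n) (r := h % n) (J := jj h) (Nat.mod_lt _ hn0) hb ht
    omega
  have hdisj : ∀ i j, i < n → j < n → i ≠ j →
      Disjoint ((⇑T)^[i] '' E) ((⇑T)^[j] '' E) := by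
    intro i j hi hj hij
    rw [Set.disjoint_left]
    intro x hxi hxj
    obtain ⟨h, b, hh, hb, hx1⟩ := (hTE i x).mp hxi
    obtain ⟨h', b', hh', hb', hx2⟩ := (hTE j x).mp hxj
    obtain ⟨rfl, heq⟩ := tower_disjoint T A (hlev h b i hb hi) (hlev h' b' j hb' hj) hx1 hx2
    have := bpos_inj (n := n) (r := h % n) (J := jj h) hi hj
      (show bpos n (h % n) (jj h) b + i = bpos n (h % n) (jj h) b' + j by omega)
    exact hij this.2
  -- the leftover set
  set L : Set X := ⋃ h ∈ Finset.range B, Gap h (jj h) with hLdef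
  have hLclopen : IsClopen L := isClopen_biUnion_finset fun h _ => hGapclopen h (jj h)
  have hcover : ∀ x : X, x ∉ L → x ∈ ⋃ j ∈ Finset.range n, (⇑T)^[j] '' E := by
    intro x hxL
    obtain ⟨h, i, hhB, hih, hx⟩ := tower_cover T A m hA2 hm1 x
    have hqr := Nat.div_add_mod h n
    have hcm : h / n * n = n * (h / n) := Nat.mul_comm _ _
    have hidec := index_decomp (n := n) (q := h / n) (r := h % n) (J := jj h) (i := i)
      hn0 (Nat.mod_lt _ hn0) (hjle h) (by omega)
    rcases hidec with ⟨hg1, hg2⟩ | ⟨b, t, hb, ht, hieq⟩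
    · exfalso
      apply hxL
      rw [hLdef]
      apply Set.mem_biUnion (Finset.mem_range.mpr (show h < B by omega))
      show x ∈ ⋃ t ∈ Finset.range (h % n), (⇑T)^[jj h * n + t] '' base T A h
      apply Set.mem_biUnion (Finset.mem_range.mpr (show i - jj h * n < h % n by omega))
      rw [show jj h * n + (i - jj h * n) = i by omega]
      exact hx
    · apply Set.mem_biUnion (Finset.mem_range.mpr ht)
      refine (hTE t x).mpr ⟨h, b, by omega, hb, ?_⟩
      rw [show t + bpos n (h % n) (jj h) b = i by omega]
      exact hx
  -- the columns
  set Col : ℕ → Set X := fun h => ⋃ i ∈ Finset.range h, (⇑T)^[i] '' base T A h with hColdef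
  have hColclopen : ∀ h, IsClopen (Col h) := fun h =>
    isClopen_biUnion_finset fun i _ => isClopen_image_iterate' T _ (base_isClopen T A hAc h)
  have hGapsub : ∀ h j, j ≤ h / n → Gap h j ⊆ Col h := by
    intro h j hj x hx
    simp only [hGapdef, Set.mem_iUnion, Finset.mem_range, exists_prop] at hx
    obtain ⟨t, ht, hx⟩ := hx
    have hjq : j * n ≤ h / n * n := Nat.mul_le_mul_right n hj
    have hqr := Nat.div_add_mod h n
    have hcm : h / n * n = n * (h / n) := Nat.mul_comm _ _
    show x ∈ ⋃ i ∈ Finset.range h, (⇑T)^[i] '' base T A h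
    exact Set.mem_biUnion (Finset.mem_range.mpr (by omega)) hx
  have hGapidx : ∀ h j t, j ≤ h / n → t < h % n → j * n + t < h := by
    intro h j t hj ht
    have hjq : j * n ≤ h / n * n := Nat.mul_le_mul_right n hj
    have hqr := Nat.div_add_mod h n
    have hcm : h / n * n = n * (h / n) := Nat.mul_comm _ _
    omega
  have hGapdisj : ∀ h j j', j ≤ h / n → j' ≤ h / n → j ≠ j' →
      Disjoint (Gap h j) (Gap h j') := by
    intro h j j' hjq hjq' hne
    rw [Set.disjoint_left]
    intro x hx1 hx2
    simp only [hGapdef, Set.mem_iUnion, Finset.mem_range, exists_prop] at hx1 hx2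
    obtain ⟨t, ht, hx1⟩ := hx1
    obtain ⟨t', ht', hx2⟩ := hx2
    have hrn : h % n < n := Nat.mod_lt _ hn0
    obtain ⟨-, heq⟩ := tower_disjoint T A (hGapidx h j t hjq ht) (hGapidx h j' t' hjq' ht') hx1 hx2
    rcases Nat.lt_or_ge j j' with hlt | hge
    · exact absurd heq (Nat.ne_of_lt (gap_ne (by omega) hlt))
    · have hlt : j' < j := by omega
      exact absurd heq.symm (Nat.ne_of_lt (gap_ne (by omega) hlt))
  have hColdisj : ∀ h h', h ≠ h' → Disjoint (Col h) (Col h') := by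
    intro h h' hne
    rw [Set.disjoint_left]
    intro x hx1 hx2
    simp only [hColdef, Set.mem_iUnion, Finset.mem_range, exists_prop] at hx1 hx2
    obtain ⟨i, hi, hx1⟩ := hx1
    obtain ⟨i', hi', hx2⟩ := hx2
    exact hne (tower_disjoint T A hi hi' hx1 hx2).1
  -- the measure estimate per column
  have hgapest : ∀ h, (m : ℝ≥0∞) * ν (Gap h (jj h)) ≤ (n : ℝ≥0∞) * ν (Col h) := by
    intro h
    rcases Set.eq_empty_or_nonempty (base T A h) with hbe | hbne
    · have hge : Gap h (jj h) = ∅ := by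
        simp [hGapdef, hbe]
      simp [hge]
    rcases Nat.eq_zero_or_pos h with rfl | hh1
    · have hge : Gap 0 (jj 0) = ∅ := by
        simp [hGapdef, Nat.zero_mod]
      simp [hge]
    have hmh : m ≤ h := base_height T A m hA1 hh1 hbne
    have hsum : ∑ j ∈ Finset.range (h / n + 1), ν (Gap h j) ≤ ν (Col h) := by
      rw [← measure_biUnion_finset]
      · apply measure_mono
        apply Set.iUnion₂_subset
        intro j hj
        exact hGapsub h j (Nat.lt_succ_iff.mp (Finset.mem_range.mp hj))
      · intro a ha b hb hab
        exact hGapdisj h a b (Nat.lt_succ_iff.mp (Finset.mem_range.mp ha))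
          (Nat.lt_succ_iff.mp (Finset.mem_range.mp hb)) hab
      · intro j _
        exact (hGapclopen h j).isOpen.measurableSet
    have hmin : (h / n + 1) • ν (Gap h (jj h)) ≤ ∑ j ∈ Finset.range (h / n + 1), ν (Gap h j) := by
      have := Finset.card_nsmul_le_sum (Finset.range (h / n + 1)) (fun j => ν (Gap h j))
        (ν (Gap h (jj h))) (fun j hj => hjmin h j (Nat.lt_succ_iff.mp (Finset.mem_range.mp hj)))
      simpa using this
    have hcard : ((h / n + 1 : ℕ) : ℝ≥0∞) * ν (Gap h (jj h)) ≤ ν (Col h) := by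
      rw [← nsmul_eq_mul]
      exact le_trans hmin hsum
    have hmle : m ≤ (h / n + 1) * n := by
      have hqr := Nat.div_add_mod h n
      have hrn : h % n < n := Nat.mod_lt _ hn0
      have hcm : (h / n + 1) * n = n * (h / n) + n := by ring
      omega
    calc (m : ℝ≥0∞) * ν (Gap h (jj h))
        ≤ (((h / n + 1) * n : ℕ) : ℝ≥0∞) * ν (Gap h (jj h)) := by
          exact mul_le_mul_left (by exact_mod_cast hmle) _
      _ = (n : ℝ≥0∞) * (((h / n + 1 : ℕ) : ℝ≥0∞) * ν (Gap h (jj h))) := by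
          push_cast
          ring
      _ ≤ (n : ℝ≥0∞) * ν (Col h) := mul_le_mul_right hcard _
  have hcolsum : ∑ h ∈ Finset.range B, ν (Col h) ≤ (k : ℝ≥0∞) := by
    rw [← measure_biUnion_finset]
    · exact le_trans (measure_mono (Set.subset_univ _)) hνuniv
    · intro a ha b hb hab
      exact hColdisj a b hab
    · intro h _
      exact (hColclopen h).isOpen.measurableSet
  have hLbound : (m : ℝ≥0∞) * ν L ≤ (n : ℝ≥0∞) * (k : ℝ≥0∞) := by
    have h1 : ν L ≤ ∑ h ∈ Finset.range B, ν (Gap h (jj h)) := by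
      rw [hLdef]
      exact measure_biUnion_finset_le _ _
    calc (m : ℝ≥0∞) * ν L ≤ (m : ℝ≥0∞) * ∑ h ∈ Finset.range B, ν (Gap h (jj h)) :=
          mul_le_mul_right h1 _
      _ = ∑ h ∈ Finset.range B, (m : ℝ≥0∞) * ν (Gap h (jj h)) := Finset.mul_sum _ _ _
      _ ≤ ∑ h ∈ Finset.range B, (n : ℝ≥0∞) * ν (Col h) :=
          Finset.sum_le_sum fun h _ => hgapest h
      _ = (n : ℝ≥0∞) * ∑ h ∈ Finset.range B, ν (Col h) := (Finset.mul_sum _ _ _).symm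
      _ ≤ (n : ℝ≥0∞) * (k : ℝ≥0∞) := mul_le_mul_right hcolsum _
  have hm0' : (m : ℝ≥0∞) ≠ 0 := by
    simp only [ne_eq, Nat.cast_eq_zero]
    omega
  have hνL : ν L < ENNReal.ofReal ε' := by
    have h2 : ν L ≤ (n : ℝ≥0∞) * (k : ℝ≥0∞) / (m : ℝ≥0∞) := by
      rw [ENNReal.le_div_iff_mul_le (Or.inl hm0') (Or.inl (ENNReal.natCast_ne_top m))]
      rwa [mul_comm] at hLbound
    have h3 : (n : ℝ≥0∞) * (k : ℝ≥0∞) / (m : ℝ≥0∞) = ENNReal.ofReal ((n * k : ℝ) / (m : ℝ)) := by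
      rw [ENNReal.ofReal_div_of_pos (by exact_mod_cast Nat.pos_of_ne_zero (by exact_mod_cast hm0'))]
      congr 1
      · rw [ENNReal.ofReal_mul (by positivity)]
        simp [ENNReal.ofReal_natCast]
      · simp [ENNReal.ofReal_natCast]
    have h4 : ENNReal.ofReal ((n * k : ℝ) / (m : ℝ)) < ENNReal.ofReal ε' := by
      rw [ENNReal.ofReal_lt_ofReal_iff hε'pos]
      rw [div_lt_iff₀ (by positivity)]
      push_cast
      linarith
    calc ν L ≤ _ := h2
      _ = _ := h3
      _ < _ := h4
  refine ⟨E, hEclopen, hdisj, ?_⟩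
  intro i
  have hmeasL : MeasurableSet L := hLclopen.isOpen.measurableSet
  have h1 : 1 - μ i L ≤ μ i (⋃ j ∈ Finset.range n, (⇑T)^[j] '' E) := by
    have hc := measure_compl hmeasL (measure_ne_top (μ i) L)
    rw [(hμ i).measure_univ] at hc
    calc 1 - μ i L = μ i Lᶜ := hc.symm
      _ ≤ μ i (⋃ j ∈ Finset.range n, (⇑T)^[j] '' E) := measure_mono fun x hx => hcover x hx
  have hμiL : μ i L < ENNReal.ofReal ε' := lt_of_le_of_lt (hνle i L) hνL
  have hfin : 1 - ENNReal.ofReal ε ≤ 1 - ENNReal.ofReal ε' :=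
    tsub_le_tsub_left (ENNReal.ofReal_le_ofReal hε'le) 1
  refine lt_of_le_of_lt hfin (lt_of_lt_of_le ?_ h1)
  have hc1 : AddLECancellable (1 : ℝ≥0∞) := ENNReal.cancel_of_ne one_ne_top
  have hc2 : AddLECancellable (ENNReal.ofReal ε') := ENNReal.cancel_of_ne ENNReal.ofReal_ne_top
  have hle1 : ENNReal.ofReal ε' ≤ 1 := ENNReal.ofReal_le_one.mpr (by
    have : (2 : ℝ)⁻¹ ≤ 1 := by norm_num
    linarith)
  exact (hc1.tsub_lt_tsub_iff_left_of_le hc2 hle1).mpr hμiL
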